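/- arXiv:2403.13848 — 2 statements merged into one kernel-verified Lean document; each statement's English description precedes it below -/
import Mathlib

section
/- Let n ≥ 1 be an integer and let β > 3 + 2√2. Then the smooth sensitivity of the Gini impurity at support size n with minimum support 1 equals its local sensitivity: sup_{k ∈ ℕ} e^{−βk}·g(max(1, n − k)) = g(n). -/
/-!
For `x > -1` we have `g x = 2x/(x+1)²`. If `1 ≤ m ≤ n ≤ m + k` then
`n + 1 ≤ (m + 1)(k + 1)`, so `g m ≤ (k+1)² g n`; taking `m = max(1, n - k)`, the factor
`(k+1)² ≤ 4^k ≤ e^{βk}` is absorbed by `e^{-βk}` as soon as `e^β ≥ 4`, which holds for `β ≥ 3`.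
Hence every term of the supremum is at most `g n`, and the term `k = 0` equals `g n`.
-/

/-- Local sensitivity of the Gini impurity as a function of the support size. -/
noncomputable def g (x : ℝ) : ℝ := 1 - (x / (x + 1))^2 - (1 / (x + 1))^2

lemma g_eq_div {x : ℝ} (hx : x + 1 ≠ 0) : g x = 2 * x / (x + 1) ^ 2 := by
  unfold g
  field_simp
  ring

lemma g_le_sq_mul_g {m x k : ℝ} (hm : 1 ≤ m) (hmx : m ≤ x) (hx : x ≤ m + k) :
    g m ≤ (k + 1) ^ 2 * g x := by
  have hk : 0 ≤ k := by linarith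
  have hx0 : 0 < x := by linarith
  rw [g_eq_div (by linarith), g_eq_div (by linarith), mul_div_assoc',
    div_le_div_iff₀ (by positivity) (by positivity)]
  have hsq : (x + 1) ^ 2 ≤ ((k + 1) * (m + 1)) ^ 2 := by
    gcongr
    nlinarith [mul_nonneg hk (by linarith : 0 ≤ m)]
  calc 2 * m * (x + 1) ^ 2 ≤ 2 * x * ((k + 1) * (m + 1)) ^ 2 := by
        gcongr 2 * ?_ * ?_
    _ = (k + 1) ^ 2 * (2 * x) * (m + 1) ^ 2 := by ring

lemma sq_succ_le_exp_mul {β : ℝ} (hβ : 3 ≤ β) (k : ℕ) :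
    ((k : ℝ) + 1) ^ 2 ≤ Real.exp (β * k) := by
  have h2k : (k : ℝ) + 1 ≤ 2 ^ k := by exact_mod_cast Nat.lt_two_pow_self
  have h4 : (4 : ℝ) ≤ Real.exp β := by linarith [Real.add_one_le_exp β]
  calc ((k : ℝ) + 1) ^ 2 ≤ ((2 : ℝ) ^ k) ^ 2 := by gcongr
    _ = 4 ^ k := by rw [← pow_mul, mul_comm, pow_mul]; norm_num
    _ ≤ Real.exp β ^ k := by gcongr
    _ = Real.exp (β * k) := by rw [← Real.exp_nat_mul, mul_comm]

lemma exp_mul_g_max_le_g {n β : ℝ} (hn : 1 ≤ n) (hβ : 3 ≤ β) (k : ℕ) :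
    Real.exp (-β * k) * g (max 1 (n - k)) ≤ g n := by
  have hk : (0 : ℝ) ≤ k := k.cast_nonneg
  have hg : g (max 1 (n - k)) ≤ ((k : ℝ) + 1) ^ 2 * g n :=
    g_le_sq_mul_g (le_max_left _ _) (max_le hn (by linarith)) (by linarith [le_max_right 1 (n - k)])
  have hgn : 0 ≤ g n := by rw [g_eq_div (by linarith)]; positivity
  rw [neg_mul, Real.exp_neg, inv_mul_le_iff₀ (Real.exp_pos _)]
  exact hg.trans (mul_le_mul_of_nonneg_right (sq_succ_le_exp_mul hβ k) hgn)

theorem smooth_sensitivity_eq_local_large_beta (n : ℤ) (hn : 1 ≤ n) (β : ℝ)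
    (hβ : 3 + 2 * Real.sqrt 2 < β) :
    (⨆ k : ℕ, Real.exp (-β * (k : ℝ)) * g (max (1 : ℝ) ((n : ℝ) - (k : ℝ)))) = g (n : ℝ) := by
  have hn' : (1 : ℝ) ≤ n := by exact_mod_cast hn
  have hβ' : 3 ≤ β := by linarith [Real.sqrt_nonneg 2]
  have hle := exp_mul_g_max_le_g hn' hβ'
  refine le_antisymm (ciSup_le hle) ?_
  have h0 := le_ciSup ⟨g n, Set.forall_mem_range.2 hle⟩ 0
  simpa [max_eq_right hn'] using h0
end

section
/- Let n ≥ 1 be an integer, let 0 < β < 3 − 2√2, set Δ = (1 − β)² − 4β, y₁ = (1 − β + √Δ)/(2β), y₂ = (1 − β − √Δ)/(2β), t₁ = n − y₁ and t₂ = n − y₂. If 0 ≤ t₁ ≤ t₂ < n − 1, then sup_{k ∈ ℕ} e^{−βk}·g(max(1, n − k)) = max( g(n), e^{−β⌊t₂⌋}·g(n − ⌊t₂⌋), e^{−β⌈t₂⌉}·g(n − ⌈t₂⌉) ). -/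
/-!
For `t ≤ n - 1` the `t`-th term is `F t = e^{-βt} g(n - t)`. Writing `y = n - t`,
`F' t = -2 e^{-βt} (β y² - (1 - β) y + 1) / (y + 1)³`, and the quadratic factors as
`β (y - y₁) (y - y₂)`. Hence `F` decreases on `[0, t₁]`, increases on `[t₁, t₂]` and decreases on
`[t₂, n - 1]`, so over the integers it is maximised at `0`, `⌊t₂⌋` or `⌈t₂⌉`. Beyond `n - 1` the
support size is clamped at `1` and the terms are at most `F (n - 1) ≤ F ⌈t₂⌉`.
-/

open Set

theorem quadratic_eq_mul_sub_mul_sub {K : Type*} [Field K] [NeZero (2 : K)] {a b c s : K}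
    (ha : a ≠ 0) (h : discrim a b c = s * s) (x : K) :
    a * (x * x) + b * x + c = a * (x - (-b + s) / (2 * a)) * (x - (-b - s) / (2 * a)) := by
  rw [discrim] at h
  field_simp
  linear_combination (-1 : K) * h

lemma hasDerivAt_g {x : ℝ} (hx : x + 1 ≠ 0) : HasDerivAt g (2 * (1 - x) / (x + 1) ^ 3) x := by
  have h : HasDerivAt (fun x : ℝ => x + 1) 1 x := (hasDerivAt_id x).add_const 1
  have h₁ := ((hasDerivAt_id' x).fun_div h hx).fun_pow 2
  have h₂ := ((hasDerivAt_const x (1 : ℝ)).fun_div h hx).fun_pow 2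
  refine (((hasDerivAt_const x (1 : ℝ)).fun_sub h₁).fun_sub h₂).congr_deriv ?_
  norm_num
  field_simp
  ring

noncomputable def discountedGini (β c t : ℝ) : ℝ := Real.exp (-β * t) * g (c - t)

lemma hasDerivAt_discountedGini (β c : ℝ) {t : ℝ} (ht : c - t + 1 ≠ 0) :
    HasDerivAt (discountedGini β c)
      (-2 * Real.exp (-β * t) * (β * ((c - t) * (c - t)) - (1 - β) * (c - t) + 1) /
        (c - t + 1) ^ 3) t := by
  have he : HasDerivAt (fun t => Real.exp (-β * t)) (Real.exp (-β * t) * (-β * 1)) t :=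
    ((hasDerivAt_id t).const_mul (-β)).exp
  have hg : HasDerivAt (fun t => g (c - t)) (2 * (1 - (c - t)) / (c - t + 1) ^ 3 * (-1)) t :=
    (hasDerivAt_g ht).comp t ((hasDerivAt_id t).const_sub c)
  refine (he.fun_mul hg).congr_deriv ?_
  simp only [g]
  field_simp
  ring

section Monotonicity

variable {β c : ℝ}

lemma antitoneOn_discountedGini {s : Set ℝ} (hs : Convex ℝ s) (hpos : ∀ t ∈ s, -1 < c - t)
    (hq : ∀ t ∈ s, 0 ≤ β * ((c - t) * (c - t)) - (1 - β) * (c - t) + 1) :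
    AntitoneOn (discountedGini β c) s := by
  have hd (t) (ht : t ∈ s) := hasDerivAt_discountedGini β c (t := t) (by linarith [hpos t ht])
  refine antitoneOn_of_hasDerivWithinAt_nonpos hs
    (fun t ht => (hd t ht).continuousAt.continuousWithinAt)
    (fun t ht => (hd t (interior_subset ht)).hasDerivWithinAt) fun t ht => ?_
  replace ht := interior_subset ht
  have : 0 < c - t + 1 := by linarith [hpos t ht]
  exact div_nonpos_of_nonpos_of_nonneg
    (mul_nonpos_of_nonpos_of_nonneg (by nlinarith [Real.exp_pos (-β * t)]) (hq t ht))
    (by positivity)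

lemma monotoneOn_discountedGini {s : Set ℝ} (hs : Convex ℝ s) (hpos : ∀ t ∈ s, -1 < c - t)
    (hq : ∀ t ∈ s, β * ((c - t) * (c - t)) - (1 - β) * (c - t) + 1 ≤ 0) :
    MonotoneOn (discountedGini β c) s := by
  have hd (t) (ht : t ∈ s) := hasDerivAt_discountedGini β c (t := t) (by linarith [hpos t ht])
  refine monotoneOn_of_hasDerivWithinAt_nonneg hs
    (fun t ht => (hd t ht).continuousAt.continuousWithinAt)
    (fun t ht => (hd t (interior_subset ht)).hasDerivWithinAt) fun t ht => ?_
  replace ht := interior_subset ht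
  have : 0 < c - t + 1 := by linarith [hpos t ht]
  exact div_nonneg
    (mul_nonneg_of_nonpos_of_nonpos (by nlinarith [Real.exp_pos (-β * t)]) (hq t ht))
    (by positivity)

variable {y₁ y₂ : ℝ}

lemma antitoneOn_discountedGini_Iic (hβ : 0 ≤ β)
    (hfac : ∀ y, β * (y * y) - (1 - β) * y + 1 = β * (y - y₁) * (y - y₂)) (hy : y₂ ≤ y₁)
    (hy₂ : -1 < y₂) :
    AntitoneOn (discountedGini β c) (Iic (c - y₁)) :=
  antitoneOn_discountedGini (convex_Iic _) (fun t ht => by simp only [mem_Iic] at ht; linarith)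
    fun t ht => by
      simp only [mem_Iic] at ht
      rw [hfac]
      exact mul_nonneg (mul_nonneg hβ (by linarith)) (by linarith)

lemma monotoneOn_discountedGini_Icc (hβ : 0 ≤ β)
    (hfac : ∀ y, β * (y * y) - (1 - β) * y + 1 = β * (y - y₁) * (y - y₂)) (hy₂ : -1 < y₂) :
    MonotoneOn (discountedGini β c) (Icc (c - y₁) (c - y₂)) :=
  monotoneOn_discountedGini (convex_Icc _ _) (fun t ht => by simp only [mem_Icc] at ht; linarith)
    fun t ht => by
      simp only [mem_Icc] at ht
      rw [hfac]
      exact mul_nonpos_of_nonpos_of_nonneg (mul_nonpos_of_nonneg_of_nonpos hβ (by linarith))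
        (by linarith)

lemma antitoneOn_discountedGini_Ico (hβ : 0 ≤ β)
    (hfac : ∀ y, β * (y * y) - (1 - β) * y + 1 = β * (y - y₁) * (y - y₂)) (hy : y₂ ≤ y₁) :
    AntitoneOn (discountedGini β c) (Ico (c - y₂) (c + 1)) :=
  antitoneOn_discountedGini (convex_Ico _ _) (fun t ht => by simp only [mem_Ico] at ht; linarith)
    fun t ht => by
      simp only [mem_Ico] at ht
      rw [hfac]
      exact mul_nonneg_of_nonpos_of_nonpos (mul_nonpos_of_nonneg_of_nonpos hβ (by linarith))
        (by linarith)

end Monotonicity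

lemma le_max_of_antitoneOn_monotoneOn_antitoneOn {F : ℝ → ℝ} {l a b d p q x : ℝ}
    (h₁ : AntitoneOn F (Icc l a)) (h₂ : MonotoneOn F (Icc a b)) (h₃ : AntitoneOn F (Icc b d))
    (hp : p ≤ b) (hq : b ≤ q) (hqd : q ≤ d) (hx : x ∈ Icc l d) (hxpq : x ≤ p ∨ q ≤ x) :
    F x ≤ max (F l) (max (F p) (F q)) := by
  obtain ⟨hlx, hxd⟩ := hx
  rcases le_or_gt x a with hxa | hax
  · exact le_max_of_le_left (h₁ ⟨le_rfl, hlx.trans hxa⟩ ⟨hlx, hxa⟩ hlx)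
  rcases hxpq with hxp | hqx
  · exact le_max_of_le_right <| le_max_of_le_left <|
      h₂ ⟨hax.le, hxp.trans hp⟩ ⟨hax.le.trans hxp, hp⟩ hxp
  · exact le_max_of_le_right <| le_max_of_le_right <|
      h₃ ⟨hq, hqd⟩ ⟨hq.trans hqx, hxd⟩ hqx

lemma Nat.cast_le_floor_or_ceil_le (k : ℕ) (b : ℝ) : (k : ℝ) ≤ ⌊b⌋ ∨ (⌈b⌉ : ℝ) ≤ k := by
  rcases le_or_gt (k : ℝ) b with h | h
  · left; exact_mod_cast Int.le_floor.2 (by exact_mod_cast h)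
  · right; exact_mod_cast Int.ceil_le.2 (by exact_mod_cast h.le)

lemma exp_mul_g_max_eq_discountedGini {β c t : ℝ} (ht : t ≤ c - 1) :
    Real.exp (-β * t) * g (max 1 (c - t)) = discountedGini β c t := by
  rw [max_eq_right (by linarith), discountedGini]

lemma exp_mul_g_max_le_discountedGini {β c t : ℝ} (hβ : 0 ≤ β) (ht : c - 1 ≤ t) :
    Real.exp (-β * t) * g (max 1 (c - t)) ≤ discountedGini β c (c - 1) := by
  rw [max_eq_left (by linarith), discountedGini, sub_sub_cancel]
  exact mul_le_mul_of_nonneg_right (Real.exp_le_exp.2 (by nlinarith)) (by norm_num [g])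

theorem iSup_exp_mul_g_max_eq {β c a b : ℝ} (hβ : 0 ≤ β)
    (h₁ : AntitoneOn (discountedGini β c) (Icc 0 a))
    (h₂ : MonotoneOn (discountedGini β c) (Icc a b))
    (h₃ : AntitoneOn (discountedGini β c) (Icc b (c - 1))) (hb : 0 ≤ b) (hbc : (⌈b⌉ : ℝ) ≤ c - 1) :
    (⨆ k : ℕ, Real.exp (-β * k) * g (max 1 (c - k))) =
      max (g c) (max (discountedGini β c ⌊b⌋) (discountedGini β c ⌈b⌉)) := by
  set F := discountedGini β c
  have hF (x : ℝ) (hx : x ∈ Icc 0 (c - 1)) (hxb : x ≤ ⌊b⌋ ∨ ⌈b⌉ ≤ x) :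
      F x ≤ max (g c) (max (F ⌊b⌋) (F ⌈b⌉)) := by
    have hF0 : F 0 = g c := by simp [F, discountedGini]
    exact hF0 ▸ le_max_of_antitoneOn_monotoneOn_antitoneOn h₁ h₂ h₃
      (Int.floor_le b) (Int.le_ceil b) hbc hx hxb
  have hc : 0 ≤ c - 1 := by linarith [Int.le_ceil b]
  have hle (k : ℕ) : Real.exp (-β * k) * g (max 1 (c - k)) ≤ max (g c) (max (F ⌊b⌋) (F ⌈b⌉)) := by
    rcases le_total (k : ℝ) (c - 1) with hk | hk
    · rw [exp_mul_g_max_eq_discountedGini hk]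
      exact hF k ⟨k.cast_nonneg, hk⟩ (k.cast_le_floor_or_ceil_le b)
    · exact (exp_mul_g_max_le_discountedGini hβ hk).trans (hF _ ⟨hc, le_rfl⟩ (Or.inr hbc))
  have hge (m : ℤ) (hm : 0 ≤ m) (hmc : (m : ℝ) ≤ c - 1) :
      F m ≤ ⨆ k : ℕ, Real.exp (-β * k) * g (max 1 (c - k)) := by
    lift m to ℕ using hm
    rw [Int.cast_natCast] at hmc ⊢
    exact (exp_mul_g_max_eq_discountedGini hmc).symm.trans_le
      (le_ciSup ⟨_, forall_mem_range.2 hle⟩ m)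
  have hfloor : 0 ≤ ⌊b⌋ := Int.floor_nonneg.2 hb
  refine le_antisymm (ciSup_le hle) (max_le ?_ (max_le ?_ ?_))
  · simpa [F, discountedGini] using hge 0 le_rfl (by simpa using hc)
  · exact hge _ hfloor ((Int.floor_le b).trans ((Int.le_ceil b).trans hbc))
  · exact hge _ (hfloor.trans (Int.floor_le_ceil b)) hbc

theorem smooth_sensitivity_small_beta_t1_nonneg_general (n : ℤ) (β : ℝ)
    (hβ0 : 0 < β) (hβ1 : β < 3 - 2 * Real.sqrt 2)
    (Δ y₁ y₂ t₁ t₂ : ℝ)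
    (hΔ : Δ = (1 - β)^2 - 4 * β)
    (hy₁ : y₁ = (1 - β + Real.sqrt Δ) / (2 * β))
    (hy₂ : y₂ = (1 - β - Real.sqrt Δ) / (2 * β))
    (ht₁ : t₁ = (n : ℝ) - y₁) (ht₂ : t₂ = (n : ℝ) - y₂)
    (ht₁0 : 0 ≤ t₁) (ht₂lt : t₂ < (n : ℝ) - 1) :
    (⨆ k : ℕ, Real.exp (-β * (k : ℝ)) * g (max (1 : ℝ) ((n : ℝ) - (k : ℝ)))) =
      max (g (n : ℝ))
        (max (Real.exp (-β * (⌊t₂⌋ : ℝ)) * g ((n : ℝ) - (⌊t₂⌋ : ℝ)))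
             (Real.exp (-β * (⌈t₂⌉ : ℝ)) * g ((n : ℝ) - (⌈t₂⌉ : ℝ)))) := by
  -- `Δ = (3 - β)² - 8` and `3 - β > 2√2`
  have hΔ0 : 0 ≤ Δ := by
    rw [hΔ]
    nlinarith [Real.sq_sqrt (zero_le_two : (0 : ℝ) ≤ 2), Real.sqrt_nonneg 2]
  have hfac (y : ℝ) : β * (y * y) - (1 - β) * y + 1 = β * (y - y₁) * (y - y₂) := by
    have hdisc : discrim β (-(1 - β)) 1 = √Δ * √Δ := by
      rw [discrim, Real.mul_self_sqrt hΔ0, hΔ]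
      ring
    rw [sub_eq_add_neg, ← neg_mul, quadratic_eq_mul_sub_mul_sub hβ0.ne' hdisc, neg_neg, hy₁, hy₂]
  have hy : y₂ ≤ y₁ := by
    rw [hy₁, hy₂]
    gcongr
    linarith [Real.sqrt_nonneg Δ]
  subst ht₁ ht₂
  exact iSup_exp_mul_g_max_eq hβ0.le
    ((antitoneOn_discountedGini_Iic hβ0.le hfac hy (by linarith)).mono Icc_subset_Iic_self)
    (monotoneOn_discountedGini_Icc hβ0.le hfac (by linarith))
    ((antitoneOn_discountedGini_Ico hβ0.le hfac hy).mono (Icc_subset_Ico_right (by linarith)))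
    (by linarith) (by exact_mod_cast Int.ceil_le.2 (by push_cast; linarith))

theorem smooth_sensitivity_small_beta_t1_nonneg (n : ℤ) (hn : 1 ≤ n) (β : ℝ)
    (hβ0 : 0 < β) (hβ1 : β < 3 - 2 * Real.sqrt 2)
    (Δ y₁ y₂ t₁ t₂ : ℝ)
    (hΔ : Δ = (1 - β)^2 - 4 * β)
    (hy₁ : y₁ = (1 - β + Real.sqrt Δ) / (2 * β))
    (hy₂ : y₂ = (1 - β - Real.sqrt Δ) / (2 * β))
    (ht₁ : t₁ = (n : ℝ) - y₁) (ht₂ : t₂ = (n : ℝ) - y₂)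
    (ht₁0 : 0 ≤ t₁) (ht₁₂ : t₁ ≤ t₂) (ht₂lt : t₂ < (n : ℝ) - 1) :
    (⨆ k : ℕ, Real.exp (-β * (k : ℝ)) * g (max (1 : ℝ) ((n : ℝ) - (k : ℝ)))) =
      max (g (n : ℝ))
        (max (Real.exp (-β * (⌊t₂⌋ : ℝ)) * g ((n : ℝ) - (⌊t₂⌋ : ℝ)))
             (Real.exp (-β * (⌈t₂⌉ : ℝ)) * g ((n : ℝ) - (⌈t₂⌉ : ℝ)))) :=
  smooth_sensitivity_small_beta_t1_nonneg_general n β hβ0 hβ1 Δ y₁ y₂ t₁ t₂ hΔ hy₁ hy₂ ht₁ ht₂ ht₁0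
    ht₂lt
end
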